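/- arXiv:1602.03302 — 2 statements merged into one kernel-verified Lean document; each statement's English description precedes it below -/
import Mathlib

section
/- For n ≥ 2, the distinguishing number of the friendship graph F_n equals min{k : ∑_{i=2}^{k} (i-1) ≥ n}, i.e., the least k with C(k,2) ≥ n. -/
open SimpleGraph

/-- A vertex labeling with `d` labels is distinguishing if the only automorphism
preserving it is the identity. -/
def IsDistinguishing {V : Type*} (G : SimpleGraph V) {d : ℕ} (c : V → Fin d) : Prop :=
  ∀ φ : G ≃g G, (∀ v, c (φ v) = c v) → ∀ v, φ v = v

/-- The distinguishing number of a graph. -/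
noncomputable def distinguishingNumber {V : Type*} (G : SimpleGraph V) : ℕ :=
  sInf {d : ℕ | ∃ c : V → Fin d, IsDistinguishing G c}

/-- An edge labeling with `d` labels is distinguishing if the only automorphism
preserving it is the identity. -/
def IsDistinguishingEdge {V : Type*} (G : SimpleGraph V) {d : ℕ} (c : G.edgeSet → Fin d) : Prop :=
  ∀ φ : G ≃g G, (∀ e, c (φ.mapEdgeSet e) = c e) → ∀ v, φ v = v

/-- The distinguishing index of a graph. -/
noncomputable def distinguishingIndex {V : Type*} (G : SimpleGraph V) : ℕ :=
  sInf {d : ℕ | ∃ c : G.edgeSet → Fin d, IsDistinguishingEdge G c}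

/-- The friendship graph `F n`: `n` triangles glued at a common central vertex `none`. -/
def friendshipGraph (n : ℕ) : SimpleGraph (Option (Fin n × Fin 2)) :=
  SimpleGraph.fromRel (fun u v =>
    u = none ∨ ∃ i a b, u = some (i, a) ∧ v = some (i, b))

/-- The book graph `B n = K_{1,n} □ P₂`. -/
def bookGraph (n : ℕ) : SimpleGraph ((Fin 1 ⊕ Fin n) × Fin 2) :=
  (completeBipartiteGraph (Fin 1) (Fin n)) □ (SimpleGraph.pathGraph 2)

/-- The corona product `G ∘ H`: one copy of `G`, a copy of `H` for each vertex `v` of `G`,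
with `v` joined to every vertex of its copy of `H`. -/
def coronaProduct {V W : Type*} (G : SimpleGraph V) (H : SimpleGraph W) :
    SimpleGraph (V ⊕ V × W) :=
  SimpleGraph.fromRel (fun a b =>
    (∃ u v, a = Sum.inl u ∧ b = Sum.inl v ∧ G.Adj u v) ∨
    (∃ v w w', a = Sum.inr (v, w) ∧ b = Sum.inr (v, w') ∧ H.Adj w w') ∨
    (∃ v w, a = Sum.inl v ∧ b = Sum.inr (v, w)))

/-!
The center is the only vertex adjacent to all others (as `n ≥ 2`), so every automorphism fixes
it and permutes the triangles, possibly flipping some of them. Hence a labeling is distinguishing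
exactly when the unordered label pairs on the outer vertices of the triangles are non-constant
and pairwise distinct, and with `k` labels there are `k.choose 2` such pairs.
-/

theorem SimpleGraph.Iso.forall_adj_apply {V W : Type*} {G : SimpleGraph V} {H : SimpleGraph W}
    (φ : G ≃g H) {v : V} (hv : ∀ w ≠ v, G.Adj v w) : ∀ w ≠ φ v, H.Adj (φ v) w := by
  intro w hw
  rw [← φ.apply_symm_apply w] at hw ⊢
  exact φ.map_adj_iff.2 (hv _ (ne_of_apply_ne φ hw))

namespace friendshipGraph

variable {n : ℕ}

@[simp]
theorem adj_none_some (x : Fin n × Fin 2) : (friendshipGraph n).Adj none (some x) := by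
  simp [friendshipGraph]

@[simp]
theorem adj_some_none (x : Fin n × Fin 2) : (friendshipGraph n).Adj (some x) none :=
  (adj_none_some x).symm

@[simp]
theorem adj_some_some {i j : Fin n} {a b : Fin 2} :
    (friendshipGraph n).Adj (some (i, a)) (some (j, b)) ↔ i = j ∧ a ≠ b := by
  simp only [friendshipGraph, fromRel_adj]
  aesop

theorem forall_adj_iff (hn : 2 ≤ n) {v : Option (Fin n × Fin 2)} :
    (∀ w ≠ v, (friendshipGraph n).Adj v w) ↔ v = none := by
  refine ⟨fun h => ?_, ?_⟩
  · rcases v with _ | ⟨i, a⟩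
    · rfl
    · have : Nontrivial (Fin n) := Fin.nontrivial_iff_two_le.mpr hn
      obtain ⟨j, hj⟩ := exists_ne i
      simpa [hj.symm] using h (some (j, 0)) (by simp [hj])
  · rintro rfl (_ | x) hw
    · exact absurd rfl hw
    · simp

theorem apply_none (hn : 2 ≤ n) (φ : friendshipGraph n ≃g friendshipGraph n) : φ none = none :=
  (forall_adj_iff hn).1 (φ.forall_adj_apply ((forall_adj_iff hn).2 rfl))

def triangleIso (σ : Equiv.Perm (Fin n)) (ε : Fin n → Fin 2) :
    friendshipGraph n ≃g friendshipGraph n where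
  toFun := Option.map fun x => (σ x.1, x.2 + ε x.1)
  invFun := Option.map fun x => (σ.symm x.1, x.2 - ε (σ.symm x.1))
  left_inv := by rintro (_ | ⟨i, a⟩) <;> simp
  right_inv := by rintro (_ | ⟨i, a⟩) <;> simp
  map_rel_iff' := by
    rintro (_ | ⟨i, a⟩) (_ | ⟨j, b⟩) <;> simp
    rintro rfl; simp

@[simp]
theorem triangleIso_none (σ : Equiv.Perm (Fin n)) (ε : Fin n → Fin 2) :
    triangleIso σ ε none = none :=
  rfl

@[simp]
theorem triangleIso_some (σ : Equiv.Perm (Fin n)) (ε : Fin n → Fin 2) (i : Fin n) (a : Fin 2) :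
    triangleIso σ ε (some (i, a)) = some (σ i, a + ε i) :=
  rfl

section Colors

variable {α : Type*}

def triangleColors (c : Option (Fin n × Fin 2) → α) (i : Fin n) : Sym2 α :=
  s(c (some (i, 0)), c (some (i, 1)))

theorem triangleColors_eq_of_ne (c : Option (Fin n × Fin 2) → α) (i : Fin n) {a b : Fin 2}
    (hab : a ≠ b) : triangleColors c i = s(c (some (i, a)), c (some (i, b))) := by
  fin_cases a <;> fin_cases b <;> simp_all [triangleColors, Sym2.eq_swap]

theorem triangleColors_eq_iff {c : Option (Fin n × Fin 2) → α} {i j : Fin n} :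
    triangleColors c i = triangleColors c j ↔
      ∃ δ : Fin 2, ∀ a, c (some (j, a + δ)) = c (some (i, a)) := by
  simp only [triangleColors, Sym2.eq_iff, Fin.forall_fin_two, Fin.exists_fin_two]
  aesop

theorem exists_triangleColors_eq [Nonempty α] (g : Fin n → Sym2 α) :
    ∃ c : Option (Fin n × Fin 2) → α, triangleColors c = g := by
  choose p hp using fun i => Quot.exists_rep (g i)
  refine ⟨fun v => v.elim (Classical.arbitrary α) fun x => ![(p x.1).1, (p x.1).2] x.2, ?_⟩
  funext i
  exact hp i

variable {d : ℕ} {c : Option (Fin n × Fin 2) → Fin d}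

/-- Swapping triangles `i` and `j` while rotating both by `δ` preserves `c`. -/
theorem eq_of_isDistinguishing (hc : IsDistinguishing (friendshipGraph n) c) {i j : Fin n}
    {δ : Fin 2} (h : ∀ a, c (some (j, a + δ)) = c (some (i, a))) : j = i ∧ δ = 0 := by
  have hδ : δ + δ = 0 := by fin_cases δ <;> rfl
  have hfix := hc (triangleIso (Equiv.swap i j) fun l => if l = i ∨ l = j then δ else 0) ?_
    (some (i, 0))
  · simpa [eq_comm] using hfix
  rintro (_ | ⟨l, a⟩)
  · rfl
  by_cases hli : l = i
  · subst hli
    simp [h]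
  by_cases hlj : l = j
  · subst hlj
    simpa [hli, add_assoc, hδ] using (h (a + δ)).symm
  · simp [hli, hlj, Equiv.swap_apply_of_ne_of_ne]

theorem not_isDiag_triangleColors (hc : IsDistinguishing (friendshipGraph n) c) (i : Fin n) :
    ¬ (triangleColors c i).IsDiag := by
  intro hdiag
  rw [triangleColors, Sym2.mk_isDiag_iff] at hdiag
  have := (eq_of_isDistinguishing hc (i := i) (j := i) (δ := 1) ?_).2
  · exact one_ne_zero this
  · simp [Fin.forall_fin_two, hdiag]

theorem injective_triangleColors (hc : IsDistinguishing (friendshipGraph n) c) :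
    Function.Injective (triangleColors c) := fun _ _ h =>
  let ⟨_, hδ⟩ := triangleColors_eq_iff.1 h
  (eq_of_isDistinguishing hc hδ).1.symm

theorem isDistinguishing_of_triangleColors (hn : 2 ≤ n)
    (hdiag : ∀ i, ¬ (triangleColors c i).IsDiag) (hinj : Function.Injective (triangleColors c)) :
    IsDistinguishing (friendshipGraph n) c := by
  intro φ hφ
  have hnone := apply_none hn φ
  have hsome (x : Fin n × Fin 2) : ∃ y, φ (some x) = some y :=
    Option.ne_none_iff_exists'.1 fun h => by simpa using φ.injective (h.trans hnone.symm)
  rintro (_ | ⟨i, a⟩)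
  · exact hnone
  obtain ⟨⟨j, b⟩, hb⟩ := hsome (i, a)
  obtain ⟨⟨j', b'⟩, hb'⟩ := hsome (i, a + 1)
  have ha : a ≠ a + 1 := by simp
  have hadj : (friendshipGraph n).Adj (some (j, b)) (some (j', b')) := by
    rw [← hb, ← hb', φ.map_adj_iff]
    simp [ha]
  obtain ⟨rfl, hbb'⟩ := adj_some_some.1 hadj
  obtain rfl : j = i := hinj <| by
    rw [triangleColors_eq_of_ne c j hbb', triangleColors_eq_of_ne c i ha, ← hb, ← hb', hφ, hφ]
  rw [hb]
  by_contra hne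
  refine hdiag j ?_
  rw [triangleColors_eq_of_ne c j (a := b) (b := a) (by simpa using hne), Sym2.mk_isDiag_iff, ← hb,
    hφ]

theorem exists_isDistinguishing_iff (hn : 2 ≤ n) :
    (∃ c : Option (Fin n × Fin 2) → Fin d, IsDistinguishing (friendshipGraph n) c) ↔
      n ≤ d.choose 2 := by
  have hcard : Fintype.card {z : Sym2 (Fin d) // ¬ z.IsDiag} = d.choose 2 := by
    rw [Sym2.card_subtype_not_diag, Fintype.card_fin]
  constructor
  · rintro ⟨c, hc⟩
    have := Fintype.card_le_of_injective (β := {z : Sym2 (Fin d) // ¬ z.IsDiag})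
      (fun i => ⟨triangleColors c i, not_isDiag_triangleColors hc i⟩)
      fun i j h => injective_triangleColors hc (congrArg Subtype.val h)
    simpa [hcard] using this
  · intro h
    obtain ⟨f⟩ : Nonempty (Fin n ↪ {z : Sym2 (Fin d) // ¬ z.IsDiag}) :=
      Function.Embedding.nonempty_of_card_le (by simpa [hcard])
    have : NeZero d := ⟨by rintro rfl; simp at h; omega⟩
    obtain ⟨c, hc⟩ := exists_triangleColors_eq fun i => (f i).val
    refine ⟨c, isDistinguishing_of_triangleColors hn (fun i => ?_) fun i j h => ?_⟩
    · simpa [hc] using (f i).2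
    · exact f.injective (Subtype.ext (by simpa [hc] using h))

end Colors

end friendshipGraph

theorem friendship_distinguishingNumber_min (n : ℕ) (hn : 2 ≤ n) :
    distinguishingNumber (friendshipGraph n) = sInf {k : ℕ | n ≤ k.choose 2} := by
  unfold distinguishingNumber
  simp_rw [friendshipGraph.exists_isDistinguishing_iff hn]
end

section
/- Let G and H be connected graphs with G ≠ K_1. If D(G) ≤ D(H), then D(G ∘ H) = D(H). -/
open SimpleGraph

/-! Since `G` has no isolated vertex, a vertex of `G` has degree at least `|H| + 1` in `G ∘ H`,
while a vertex of a copy of `H` has degree at most `|H|`. So every automorphism of `G ∘ H` maps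
`G` to itself, and once it fixes `G` pointwise it maps each copy of `H` to itself. Hence a
distinguishing labeling of `G` together with one of `H` on every copy, both with `D(H)` labels
(possible as `D(G) ≤ D(H)`), distinguishes `G ∘ H`. Conversely, every automorphism of `H` extends
to `G ∘ H` by acting on a single copy, so a distinguishing labeling of `G ∘ H` restricts to one
of `H`. -/

section

variable {V W X : Type*} {G : SimpleGraph V} {H : SimpleGraph W} {K : SimpleGraph X} {d : ℕ}

theorem isDistinguishing_of_injective {c : V → Fin d} (hc : c.Injective) :
    IsDistinguishing G c :=
  fun _ hφ v ↦ hc (hφ v)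

theorem IsDistinguishing.castLE {c : V → Fin d} (hc : IsDistinguishing G c) {d' : ℕ}
    (h : d ≤ d') : IsDistinguishing G (Fin.castLE h ∘ c) :=
  fun φ hφ ↦ hc φ fun v ↦ Fin.castLE_injective h (hφ v)

theorem IsDistinguishing.embedding_apply_eq [Finite V] {c : V → Fin d}
    (hc : IsDistinguishing G c) (f : G ↪g G) (hf : ∀ v, c (f v) = c v) (v : V) : f v = v :=
  hc ⟨Equiv.ofBijective f (Finite.injective_iff_bijective.1 f.injective), f.map_rel_iff⟩ hf v

theorem IsDistinguishing.apply_eq_of_mapsTo [Finite V] {e : G ↪g K} {c : X → Fin d}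
    (hc : IsDistinguishing G (c ∘ e)) {φ : K ≃g K} (hφ : ∀ x, c (φ x) = c x)
    (hmaps : ∀ v, ∃ u, φ (e v) = e u) (v : V) : φ (e v) = e v := by
  choose σ hσ using hmaps
  have hσ_inj : σ.Injective := fun a b h ↦ e.injective (φ.injective (by rw [hσ, hσ, h]))
  have hσ_adj {a b : V} : G.Adj (σ a) (σ b) ↔ G.Adj a b := by
    rw [← e.map_adj_iff, ← hσ, ← hσ, φ.map_adj_iff, e.map_adj_iff]
  have hσ_fix : ∀ v, σ v = v :=
    hc.embedding_apply_eq ⟨⟨σ, hσ_inj⟩, hσ_adj⟩ fun v ↦ by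
      change c (e (σ v)) = c (e v)
      rw [← hσ, hφ]
  rw [hσ, hσ_fix]

theorem distinguishingNumber_le {c : V → Fin d} (hc : IsDistinguishing G c) :
    distinguishingNumber G ≤ d :=
  Nat.sInf_le ⟨c, hc⟩

theorem exists_isDistinguishing_distinguishingNumber [Fintype V] (G : SimpleGraph V) :
    ∃ c : V → Fin (distinguishingNumber G), IsDistinguishing G c :=
  Nat.sInf_mem (s := {d | ∃ c : V → Fin d, IsDistinguishing G c})
    ⟨_, _, isDistinguishing_of_injective (Fintype.equivFin V).injective⟩

@[simp]
theorem coronaProduct_adj_inl_inl {u v : V} :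
    (coronaProduct G H).Adj (Sum.inl u) (Sum.inl v) ↔ G.Adj u v := by
  simpa [coronaProduct, G.adj_comm v u] using G.ne_of_adj

@[simp]
theorem coronaProduct_adj_inl_inr {u v : V} {w : W} :
    (coronaProduct G H).Adj (Sum.inl u) (Sum.inr (v, w)) ↔ u = v := by
  simp [coronaProduct, eq_comm]

@[simp]
theorem coronaProduct_adj_inr_inl {u v : V} {w : W} :
    (coronaProduct G H).Adj (Sum.inr (v, w)) (Sum.inl u) ↔ v = u := by
  simp [coronaProduct]

@[simp]
theorem coronaProduct_adj_inr_inr {v v' : V} {w w' : W} :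
    (coronaProduct G H).Adj (Sum.inr (v, w)) (Sum.inr (v', w')) ↔ v = v' ∧ H.Adj w w' := by
  simp only [coronaProduct, fromRel_adj]
  grind [H.adj_comm, H.ne_of_adj]

namespace coronaProduct

def inlEmbedding : G ↪g coronaProduct G H where
  toFun := Sum.inl
  inj' := Sum.inl_injective
  map_rel_iff' := coronaProduct_adj_inl_inl

def copyEmbedding (v : V) : H ↪g coronaProduct G H where
  toFun w := Sum.inr (v, w)
  inj' := Sum.inr_injective.comp (Prod.mk_right_injective v)
  map_rel_iff' := by simp

@[simp]
theorem copyEmbedding_apply (v : V) (w : W) :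
    copyEmbedding (G := G) (H := H) v w = Sum.inr (v, w) := rfl

def autOfCopies (τ : V → H ≃g H) : coronaProduct G H ≃g coronaProduct G H where
  toEquiv := (Equiv.refl V).sumCongr ((Equiv.refl V).prodShear fun v ↦ (τ v).toEquiv)
  map_rel_iff' := by
    rintro (u | ⟨u, w⟩) (v | ⟨v, w'⟩) <;> simp [and_congr_right_iff]
    rintro rfl
    exact (τ u).map_adj_iff

@[simp]
theorem autOfCopies_inr (τ : V → H ≃g H) (v : V) (w : W) :
    autOfCopies (G := G) τ (Sum.inr (v, w)) = Sum.inr (v, τ v w) := rfl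

theorem card_lt_card_neighborSet_inl [Finite V] [Finite W] {u v : V} (huv : G.Adj v u) :
    Nat.card W < Nat.card ((coronaProduct G H).neighborSet (Sum.inl v)) := by
  let f : Option W → (coronaProduct G H).neighborSet (Sum.inl v) :=
    fun o ↦ o.elim ⟨Sum.inl u, by simpa using huv⟩ fun w ↦ ⟨Sum.inr (v, w), by simp⟩
  have hf : f.Injective := by
    rintro (_ | a) (_ | b) h <;> simp_all [f]
  have := Nat.card_le_card_of_injective f hf
  rwa [Finite.card_option, ← Nat.lt_iff_add_one_le] at this

theorem card_neighborSet_inr_le [Finite W] (v : V) (w : W) :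
    Nat.card ((coronaProduct G H).neighborSet (Sum.inr (v, w))) ≤ Nat.card W := by
  let f : (coronaProduct G H).neighborSet (Sum.inr (v, w)) → W :=
    fun x ↦ Sum.elim (fun _ ↦ w) Prod.snd x.1
  have hf : f.Injective := by
    rintro ⟨a, ha⟩ ⟨b, hb⟩ h
    rw [mem_neighborSet] at ha hb
    rcases a with a | ⟨a, a'⟩ <;> rcases b with b | ⟨b, b'⟩ <;> simp_all [f]
  exact Nat.card_le_card_of_injective f hf

theorem exists_apply_inl_eq_inl [Finite V] [Finite W] (hG : ∀ v, ∃ u, G.Adj v u)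
    (φ : coronaProduct G H ≃g coronaProduct G H) (v : V) :
    ∃ u, φ (Sum.inl v) = Sum.inl u := by
  obtain ⟨u, huv⟩ := hG v
  rcases h : φ (Sum.inl v) with u' | ⟨v', w'⟩
  · exact ⟨u', rfl⟩
  · have hcard := Nat.card_congr (φ.mapNeighborSet (Sum.inl v))
    rw [h] at hcard
    have hinl := card_lt_card_neighborSet_inl (H := H) huv
    have hinr := card_neighborSet_inr_le (G := G) (H := H) v' w'
    omega

theorem exists_apply_inr_eq_inr (φ : coronaProduct G H ≃g coronaProduct G H)
    (hφ : ∀ v, φ (Sum.inl v) = Sum.inl v) (v : V) (w : W) :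
    ∃ w', φ (Sum.inr (v, w)) = Sum.inr (v, w') := by
  have hadj : (coronaProduct G H).Adj (φ (Sum.inr (v, w))) (Sum.inl v) := by
    rw [← hφ v, φ.map_adj_iff, coronaProduct_adj_inr_inl]
  rcases h : φ (Sum.inr (v, w)) with u | ⟨v', w'⟩
  · exact absurd (φ.injective ((hφ u).trans h.symm)) Sum.inl_ne_inr
  · rw [h, coronaProduct_adj_inr_inl] at hadj
    exact ⟨w', by rw [hadj]⟩

end coronaProduct

theorem IsDistinguishing.coronaProduct_sumElim [Finite V] [Finite W]
    (hG : ∀ v, ∃ u, G.Adj v u) {cG : V → Fin d} {cH : W → Fin d} (hcG : IsDistinguishing G cG)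
    (hcH : IsDistinguishing H cH) :
    IsDistinguishing (coronaProduct G H) (Sum.elim cG (cH ∘ Prod.snd)) := by
  intro φ hφ
  have hbase : ∀ v, φ (Sum.inl v) = Sum.inl v :=
    hcG.apply_eq_of_mapsTo (e := coronaProduct.inlEmbedding) hφ
      (coronaProduct.exists_apply_inl_eq_inl hG φ)
  rintro (v | ⟨v, w⟩)
  · exact hbase v
  · exact hcH.apply_eq_of_mapsTo (e := coronaProduct.copyEmbedding v) hφ
      (coronaProduct.exists_apply_inr_eq_inr φ hbase v) w

theorem IsDistinguishing.comp_coronaProduct_copyEmbedding {c : V ⊕ V × W → Fin d}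
    (hc : IsDistinguishing (coronaProduct G H) c) (v₀ : V) :
    IsDistinguishing H (c ∘ coronaProduct.copyEmbedding (G := G) (H := H) v₀) := by
  classical
  intro τ hτ w
  have hpres : ∀ x, c (coronaProduct.autOfCopies (G := G) (Pi.mulSingle v₀ τ) x) = c x := by
    rintro (u | ⟨v, w⟩)
    · rfl
    · rcases eq_or_ne v v₀ with rfl | hv
      · simpa using hτ w
      · simp [hv]
  simpa using hc _ hpres (Sum.inr (v₀, w))

end

theorem corona_distinguishingNumber_of_le_general {V W : Type*} [Fintype V] [Fintype W]
    (G : SimpleGraph V) (H : SimpleGraph W)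
    (hG : G.Connected) (hV : 2 ≤ Fintype.card V)
    (hle : distinguishingNumber G ≤ distinguishingNumber H) :
    distinguishingNumber (coronaProduct G H) = distinguishingNumber H := by
  have : Nontrivial V := Fintype.one_lt_card_iff_nontrivial.1 hV
  obtain ⟨cG, hcG⟩ := exists_isDistinguishing_distinguishingNumber G
  obtain ⟨cH, hcH⟩ := exists_isDistinguishing_distinguishingNumber H
  obtain ⟨c, hc⟩ := exists_isDistinguishing_distinguishingNumber (coronaProduct G H)
  obtain ⟨v₀⟩ := hG.nonempty
  exact le_antisymm
    (distinguishingNumber_le ((hcG.castLE hle).coronaProduct_sumElim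
      hG.preconnected.exists_adj_of_nontrivial hcH))
    (distinguishingNumber_le (hc.comp_coronaProduct_copyEmbedding v₀))

theorem corona_distinguishingNumber_of_le {V W : Type*} [Fintype V] [Fintype W]
    (G : SimpleGraph V) (H : SimpleGraph W)
    (hG : G.Connected) (hH : H.Connected) (hV : 2 ≤ Fintype.card V)
    (hle : distinguishingNumber G ≤ distinguishingNumber H) :
    distinguishingNumber (coronaProduct G H) = distinguishingNumber H :=
  corona_distinguishingNumber_of_le_general G H hG hV hle
end
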